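/- arXiv:2003.01922 — 4 statements merged into one kernel-verified Lean document; each statement's English description precedes it below -/
import Mathlib

section
/- Let η > 0 and let M, L ∈ ℝ^N. Given a distribution Q' on [N], define Q(π) ∝ Q'(π)exp(−ηM(π)) and Q''(π) ∝ Q'(π)exp(−ηL(π)). If L(π) − M(π) ≥ −1/η for all π, then for any distribution Q* on [N]: Σ_π (Q(π) − Q*(π))L(π) ≤ (D(Q*, Q') − D(Q*, Q''))/η + η·Σ_π Q(π)(L(π) − M(π))². -/
open Finset

lemma exp_neg_le_quadratic {z : ℝ} (hz : -1 ≤ z) : Real.exp (-z) ≤ 1 - z + z ^ 2 := by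
  rcases le_total z 1 with h1 | h1
  · have habs : |(-z)| ≤ 1 := by rw [abs_le]; constructor <;> linarith
    have hb := Real.exp_bound habs (n := 2) (by norm_num)
    rw [Finset.sum_range_succ, Finset.sum_range_succ, Finset.sum_range_zero] at hb
    have h2 : |(-z)| ^ 2 = z ^ 2 := by rw [abs_neg, sq_abs]
    rw [abs_sub_le_iff] at hb
    have := hb.1
    simp only [h2] at this ⊢
    norm_num at this
    nlinarith [this]
  · have he : z + 1 ≤ Real.exp z := Real.add_one_le_exp z
    have hpos : (0:ℝ) < Real.exp (-z) := Real.exp_pos _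
    have hmul : Real.exp (-z) * Real.exp z = 1 := by
      rw [← Real.exp_add]; simp
    nlinarith [hpos, he, hmul]

/-- Optimistic Exp4 (optimistic mirror descent with entropy regularizer) regret
inequality, under the condition `L π - M π ≥ -1/η`. -/
theorem optimistic_exp4_conditional (N : ℕ) (hN : 0 < N) (η : ℝ) (hη : 0 < η)
    (M L : Fin N → ℝ) (Q' : Fin N → ℝ)
    (hQ'pos : ∀ π, 0 < Q' π) (hQ'sum : ∑ π, Q' π = 1)
    (Q Q'' : Fin N → ℝ)
    (hQ : ∀ π, Q π = Q' π * Real.exp (-η * M π) /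
      ∑ π', Q' π' * Real.exp (-η * M π'))
    (hQ'' : ∀ π, Q'' π = Q' π * Real.exp (-η * L π) /
      ∑ π', Q' π' * Real.exp (-η * L π'))
    (hLM : ∀ π, L π - M π ≥ -(1/η))
    (Qstar : Fin N → ℝ) (hQstar0 : ∀ π, 0 ≤ Qstar π) (hQstar1 : ∑ π, Qstar π = 1) :
    ∑ π, (Q π - Qstar π) * L π ≤
      ((∑ π, Qstar π * Real.log (Qstar π / Q' π)) -
        ∑ π, Qstar π * Real.log (Qstar π / Q'' π)) / η
      + η * ∑ π, Q π * (L π - M π)^2 := by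
  have hne : Nonempty (Fin N) := ⟨⟨0, hN⟩⟩
  set ZM := ∑ π', Q' π' * Real.exp (-η * M π') with hZMdef
  set ZL := ∑ π', Q' π' * Real.exp (-η * L π') with hZLdef
  have hZM : 0 < ZM := Finset.sum_pos (fun π _ => mul_pos (hQ'pos π) (Real.exp_pos _))
    Finset.univ_nonempty
  have hZL : 0 < ZL := Finset.sum_pos (fun π _ => mul_pos (hQ'pos π) (Real.exp_pos _))
    Finset.univ_nonempty
  have hQpos : ∀ π, 0 < Q π := fun π => by
    rw [hQ π]; exact div_pos (mul_pos (hQ'pos π) (Real.exp_pos _)) hZM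
  have hQsum : ∑ π, Q π = 1 := by
    simp only [hQ]
    rw [← Finset.sum_div, div_self hZM.ne']
  -- Step A: ZL = ZM * ∑ Q * exp(-η(L-M))
  have hA : ZL = ZM * ∑ π, Q π * Real.exp (-η * (L π - M π)) := by
    rw [Finset.mul_sum, hZLdef]
    apply Finset.sum_congr rfl
    intro π _
    have hexp : Real.exp (-η * L π) = Real.exp (-η * M π) * Real.exp (-η * (L π - M π)) := by
      rw [← Real.exp_add]; ring_nf
    rw [hQ π, hexp]
    field_simp
  -- Step B
  set S := ∑ π, Q π * (L π - M π) with hSdef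
  set T := ∑ π, Q π * (L π - M π) ^ 2 with hTdef
  have hB : ∑ π, Q π * Real.exp (-η * (L π - M π)) ≤ 1 - η * S + η ^ 2 * T := by
    have hpt : ∀ π, Q π * Real.exp (-η * (L π - M π)) ≤
        Q π - η * (Q π * (L π - M π)) + η ^ 2 * (Q π * (L π - M π) ^ 2) := by
      intro π
      have hz : -1 ≤ η * (L π - M π) := by
        have h := hLM π
        calc (-1 : ℝ) = η * (-(1/η)) := by field_simp
          _ ≤ η * (L π - M π) := mul_le_mul_of_nonneg_left h hη.le
      have hq := exp_neg_le_quadratic hz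
      rw [show -(η * (L π - M π)) = -η * (L π - M π) by ring] at hq
      have := mul_le_mul_of_nonneg_left hq (hQpos π).le
      nlinarith [this]
    calc ∑ π, Q π * Real.exp (-η * (L π - M π))
        ≤ ∑ π, (Q π - η * (Q π * (L π - M π)) + η ^ 2 * (Q π * (L π - M π) ^ 2)) :=
          Finset.sum_le_sum (fun π _ => hpt π)
      _ = 1 - η * S + η ^ 2 * T := by
          rw [Finset.sum_add_distrib, Finset.sum_sub_distrib, ← Finset.mul_sum,
            ← Finset.mul_sum, hQsum, ← hSdef, ← hTdef]
  -- Step C: log ZL ≤ log ZM - η S + η² T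
  have hSumPos : 0 < ∑ π, Q π * Real.exp (-η * (L π - M π)) :=
    Finset.sum_pos (fun π _ => mul_pos (hQpos π) (Real.exp_pos _)) Finset.univ_nonempty
  have hC : Real.log ZL ≤ Real.log ZM - η * S + η ^ 2 * T := by
    rw [hA, Real.log_mul hZM.ne' hSumPos.ne']
    have hlog : Real.log (∑ π, Q π * Real.exp (-η * (L π - M π))) ≤
        (∑ π, Q π * Real.exp (-η * (L π - M π))) - 1 :=
      Real.log_le_sub_one_of_pos hSumPos
    linarith [hB]
  -- Step D: log ZM ≤ -η ∑ Q M
  have hD : Real.log ZM ≤ -η * ∑ π, Q π * M π := by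
    have hkey : ∀ π, Q π * Real.log ZM = Q π * (Real.log (Q' π / Q π) - η * M π) := by
      intro π
      congr 1
      have hZMeq : ZM = Q' π * Real.exp (-η * M π) / Q π := by
        rw [eq_div_iff (hQpos π).ne', hQ π, mul_comm]
        exact div_mul_cancel₀ _ hZM.ne'
      rw [hZMeq, Real.log_div (mul_pos (hQ'pos π) (Real.exp_pos _)).ne' (hQpos π).ne',
        Real.log_mul (hQ'pos π).ne' (Real.exp_pos _).ne', Real.log_exp,
        Real.log_div (hQ'pos π).ne' (hQpos π).ne']
      ring
    have h1 : Real.log ZM = ∑ π, Q π * Real.log ZM := by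
      rw [← Finset.sum_mul, hQsum, one_mul]
    rw [h1]
    have h2 : ∑ π, Q π * Real.log ZM =
        (∑ π, Q π * Real.log (Q' π / Q π)) - η * ∑ π, Q π * M π := by
      calc ∑ π, Q π * Real.log ZM = ∑ π, Q π * (Real.log (Q' π / Q π) - η * M π) :=
            Finset.sum_congr rfl (fun π _ => hkey π)
        _ = (∑ π, Q π * Real.log (Q' π / Q π)) - η * ∑ π, Q π * M π := by
            rw [Finset.mul_sum, ← Finset.sum_sub_distrib]
            exact Finset.sum_congr rfl (fun π _ => by ring)
    rw [h2]
    have h3 : ∑ π, Q π * Real.log (Q' π / Q π) ≤ 0 := by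
      have hpt : ∀ π, Q π * Real.log (Q' π / Q π) ≤ Q' π - Q π := by
        intro π
        have hd : 0 < Q' π / Q π := div_pos (hQ'pos π) (hQpos π)
        have h := mul_le_mul_of_nonneg_left (Real.log_le_sub_one_of_pos hd) (hQpos π).le
        calc Q π * Real.log (Q' π / Q π) ≤ Q π * (Q' π / Q π - 1) := h
          _ = Q' π - Q π := by
              rw [mul_sub, mul_one, ← mul_div_assoc, mul_div_cancel_left₀ _ (hQpos π).ne']
      calc ∑ π, Q π * Real.log (Q' π / Q π) ≤ ∑ π, (Q' π - Q π) :=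
            Finset.sum_le_sum (fun π _ => hpt π)
        _ = 0 := by rw [Finset.sum_sub_distrib, hQ'sum, hQsum]; ring
    linarith
  -- Step E: KL difference
  have hE : (∑ π, Qstar π * Real.log (Qstar π / Q' π)) -
      ∑ π, Qstar π * Real.log (Qstar π / Q'' π) =
      -η * (∑ π, Qstar π * L π) - Real.log ZL := by
    have hpt : ∀ π, Qstar π * Real.log (Qstar π / Q' π) -
        Qstar π * Real.log (Qstar π / Q'' π) =
        Qstar π * (-η * L π - Real.log ZL) := by
      intro π
      rcases eq_or_lt_of_le (hQstar0 π) with h0 | h0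
      · rw [← h0]; ring
      · have hQ''pos : 0 < Q'' π := by
          rw [hQ'' π]; exact div_pos (mul_pos (hQ'pos π) (Real.exp_pos _)) hZL
        rw [Real.log_div h0.ne' (hQ'pos π).ne', Real.log_div h0.ne' hQ''pos.ne']
        have hlq : Real.log (Q'' π) = Real.log (Q' π) + (-η * L π) - Real.log ZL := by
          rw [hQ'' π, Real.log_div (mul_pos (hQ'pos π) (Real.exp_pos _)).ne' hZL.ne',
            Real.log_mul (hQ'pos π).ne' (Real.exp_pos _).ne', Real.log_exp]
        rw [hlq]; ring
    have hlogsplit : Real.log ZL = ∑ π, Qstar π * Real.log ZL := by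
      rw [← Finset.sum_mul, hQstar1, one_mul]
    calc (∑ π, Qstar π * Real.log (Qstar π / Q' π)) -
        ∑ π, Qstar π * Real.log (Qstar π / Q'' π)
        = ∑ π, (Qstar π * Real.log (Qstar π / Q' π) -
            Qstar π * Real.log (Qstar π / Q'' π)) := by rw [Finset.sum_sub_distrib]
      _ = ∑ π, Qstar π * (-η * L π - Real.log ZL) :=
          Finset.sum_congr rfl (fun π _ => hpt π)
      _ = (∑ π, -η * (Qstar π * L π)) - ∑ π, Qstar π * Real.log ZL := by
          rw [← Finset.sum_sub_distrib]
          exact Finset.sum_congr rfl (fun π _ => by ring)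
      _ = -η * (∑ π, Qstar π * L π) - Real.log ZL := by
          rw [← Finset.mul_sum, ← Finset.sum_mul, hQstar1, one_mul]
  -- combine
  have hQLM : ∑ π, Q π * L π = (∑ π, Q π * M π) + S := by
    rw [hSdef, ← Finset.sum_add_distrib]
    exact Finset.sum_congr rfl (fun π _ => by ring)
  have hfinal : Real.log ZL ≤ -η * (∑ π, Q π * L π) + η ^ 2 * T := by
    rw [hQLM]; nlinarith [hC, hD]
  rw [hE]
  have hLHS : ∑ π, (Q π - Qstar π) * L π =
      (∑ π, Q π * L π) - ∑ π, Qstar π * L π := by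
    rw [← Finset.sum_sub_distrib]
    exact Finset.sum_congr rfl (fun π _ => by ring)
  rw [hLHS, ← sub_nonneg]
  have hcalc : (-η * (∑ π, Qstar π * L π) - Real.log ZL) / η + η * T -
      ((∑ π, Q π * L π) - ∑ π, Qstar π * L π) =
      ((-η * (∑ π, Q π * L π) + η ^ 2 * T) - Real.log ZL) / η := by
    field_simp
    ring
  rw [hcalc]
  apply div_nonneg _ hη.le
  linarith [hfinal]
end

section
/- Let η > 0 and let M, L ∈ ℝ^N. Given a distribution Q' on [N], define Q(π) ∝ Q'(π)exp(−ηM(π)) and Q''(π) ∝ Q'(π)exp(−ηL(π)). Then there exists a distribution ξ on [N] (a convex combination of Q and Q'') such that for any distribution Q* on [N]: Σ_π (Q(π) − Q*(π))L(π) ≤ (D(Q*, Q') − D(Q*, Q''))/η + 2η·Σ_π ξ(π)(L(π) − M(π))². -/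
/-!
Write `Q_f = Q' e^f / Z_f` with `Z_f = ∑ Q' e^f`. Since `log (Q_f / Q') = f - log Z_f`,
`D(Q*, Q') - D(Q*, Q'') = -η ⟨Q*, L⟩ - log Z_{-ηL}` for every distribution `Q*`, so the claim
with `ξ = (Q + Q'') / 2` reduces to `η ⟨Q, L⟩ + log Z_{-ηL} ≤ η² ∑ (Q + Q'') (L - M)²`.
The left side is `D(Q, Q'') - D(Q, Q') ≤ D(Q, Q'')` (Gibbs). Finally
`D(Q, Q'') = η ⟨Q - Q'', L - M⟩ - D(Q'', Q)`, and termwise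
`(q - p) y ≤ (p + q) y² + (p log (p / q) - p + q)` by AM-GM and the Hellinger bound
`(√q - √p)² ≤ p log (p / q) - p + q`.
-/

section

open Real Finset

lemma sub_le_mul_log_div {p q : ℝ} (hp : 0 < p) (hq : 0 < q) : q - p ≤ q * log (q / p) := by
  have h := one_sub_inv_le_log_of_pos (div_pos hq hp)
  rw [inv_div] at h
  calc q - p = q * (1 - p / q) := by field_simp
    _ ≤ q * log (q / p) := mul_le_mul_of_nonneg_left h hq.le

lemma sq_sqrt_sub_sqrt_le {p q : ℝ} (hp : 0 < p) (hq : 0 < q) :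
    (√q - √p) ^ 2 ≤ p * log (p / q) - p + q := by
  have hsp := sq_sqrt hp.le
  have hsq := sq_sqrt hq.le
  have hlog : log (p / q) = 2 * log (√p / √q) := by
    rw [← log_rpow (div_pos (sqrt_pos.2 hp) (sqrt_pos.2 hq)), div_rpow (sqrt_nonneg _) (sqrt_nonneg _)]
    norm_num [hsp, hsq]
  have h := sub_le_mul_log_div (sqrt_pos.2 hq) (sqrt_pos.2 hp)
  have h2 := mul_le_mul_of_nonneg_left h (sqrt_nonneg p)
  rw [hlog]
  nlinarith

lemma mul_sub_le_add_mul_log_div {p q : ℝ} (hp : 0 < p) (hq : 0 < q) (y : ℝ) :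
    (q - p) * y ≤ (p + q) * y ^ 2 + (p * log (p / q) - p + q) := by
  have hH := sq_sqrt_sub_sqrt_le hp hq
  have hsp := sq_sqrt hp.le
  have hsq := sq_sqrt hq.le
  have hdiff : (q - p) ^ 2 ≤ 2 * (p + q) * (√q - √p) ^ 2 := by
    have hsum : (√q + √p) ^ 2 ≤ 2 * (p + q) := by nlinarith [sq_nonneg (√q - √p)]
    calc (q - p) ^ 2 = (√q - √p) ^ 2 * (√q + √p) ^ 2 := by nth_rw 1 [← hsp, ← hsq]; ring
      _ ≤ (√q - √p) ^ 2 * (2 * (p + q)) := mul_le_mul_of_nonneg_left hsum (sq_nonneg _)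
      _ = 2 * (p + q) * (√q - √p) ^ 2 := by ring
  have hpq : 0 < 4 * (p + q) := by positivity
  refine le_of_mul_le_mul_left ?_ hpq
  nlinarith [sq_nonneg (2 * (p + q) * y - (q - p)), mul_le_mul_of_nonneg_left hH hpq.le]

variable {ι : Type*} [Fintype ι]

noncomputable def kl (Q P : ι → ℝ) : ℝ := ∑ i, Q i * log (Q i / P i)

noncomputable def partitionFn (P g : ι → ℝ) : ℝ := ∑ i, P i * exp (g i)

noncomputable def expTilt (P g : ι → ℝ) (i : ι) : ℝ := P i * exp (g i) / partitionFn P g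

lemma kl_nonneg {Q P : ι → ℝ} (hQ : ∀ i, 0 < Q i) (hP : ∀ i, 0 < P i)
    (hsum : ∑ i, P i ≤ ∑ i, Q i) : 0 ≤ kl Q P :=
  calc 0 ≤ ∑ i, (Q i - P i) := by rw [sum_sub_distrib]; linarith
    _ ≤ kl Q P := sum_le_sum fun i _ => sub_le_mul_log_div (hP i) (hQ i)

lemma mul_log_div_sub_mul_log_div (s : ℝ) {a b : ℝ} (ha : a ≠ 0) (hb : b ≠ 0) :
    s * log (s / a) - s * log (s / b) = s * log (b / a) := by
  rcases eq_or_ne s 0 with rfl | hs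
  · simp
  · rw [log_div hs ha, log_div hs hb, log_div hb ha]; ring

section expTilt

variable [Nonempty ι] {P : ι → ℝ}

lemma partitionFn_pos (hP : ∀ i, 0 < P i) (g : ι → ℝ) : 0 < partitionFn P g :=
  sum_pos (fun i _ => mul_pos (hP i) (exp_pos _)) univ_nonempty

lemma expTilt_pos (hP : ∀ i, 0 < P i) (g : ι → ℝ) (i : ι) : 0 < expTilt P g i :=
  div_pos (mul_pos (hP i) (exp_pos _)) (partitionFn_pos hP g)

lemma sum_expTilt (hP : ∀ i, 0 < P i) (g : ι → ℝ) : ∑ i, expTilt P g i = 1 := by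
  simp only [expTilt]
  rw [← sum_div]
  exact div_self (partitionFn_pos hP g).ne'

lemma log_expTilt_div (hP : ∀ i, 0 < P i) (g : ι → ℝ) (i : ι) :
    log (expTilt P g i / P i) = g i - log (partitionFn P g) := by
  have h : expTilt P g i / P i = exp (g i) / partitionFn P g := by
    rw [expTilt, div_right_comm, mul_div_cancel_left₀ _ (hP i).ne']
  rw [h, log_div (exp_pos _).ne' (partitionFn_pos hP g).ne', log_exp]

lemma log_expTilt_div_expTilt (hP : ∀ i, 0 < P i) (g h : ι → ℝ) (i : ι) :
    log (expTilt P g i / expTilt P h i)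
      = g i - h i - (log (partitionFn P g) - log (partitionFn P h)) := by
  rw [← div_div_div_cancel_right₀ (hP i).ne', log_div (div_pos (expTilt_pos hP g i) (hP i)).ne'
    (div_pos (expTilt_pos hP h i) (hP i)).ne', log_expTilt_div hP, log_expTilt_div hP]
  ring

lemma sum_mul_log_expTilt_div (hP : ∀ i, 0 < P i) (h : ι → ℝ) {S : ι → ℝ}
    (hS : ∑ i, S i = 1) :
    ∑ i, S i * log (expTilt P h i / P i) = ∑ i, S i * h i - log (partitionFn P h) := by
  simp_rw [log_expTilt_div hP, mul_sub, sum_sub_distrib, ← sum_mul, hS, one_mul]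

lemma kl_sub_kl_expTilt (hP : ∀ i, 0 < P i) (h : ι → ℝ) {S : ι → ℝ} (hS : ∑ i, S i = 1) :
    kl S P - kl S (expTilt P h) = ∑ i, S i * h i - log (partitionFn P h) := by
  rw [kl, kl, ← sum_mul_log_expTilt_div hP h hS, ← sum_sub_distrib]
  exact sum_congr rfl fun i _ =>
    mul_log_div_sub_mul_log_div _ (hP i).ne' (expTilt_pos hP h i).ne'

lemma log_partitionFn_sub_le_kl_expTilt (hP : ∀ i, 0 < P i) (hP1 : ∑ i, P i ≤ 1) (h : ι → ℝ)
    {Q : ι → ℝ} (hQ : ∀ i, 0 < Q i) (hQ1 : ∑ i, Q i = 1) :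
    log (partitionFn P h) - ∑ i, Q i * h i ≤ kl Q (expTilt P h) := by
  have hdiff := kl_sub_kl_expTilt hP h hQ1
  linarith [kl_nonneg hQ hP (hQ1 ▸ hP1)]

lemma kl_expTilt_le (hP : ∀ i, 0 < P i) (g h : ι → ℝ) :
    kl (expTilt P g) (expTilt P h)
      ≤ ∑ i, (expTilt P g i + expTilt P h i) * (g i - h i) ^ 2 := by
  have hQR := log_expTilt_div_expTilt hP g h
  have hRQ := log_expTilt_div_expTilt hP h g
  have hQ := expTilt_pos hP g
  have hR := expTilt_pos hP h
  have hzero : ∑ i, (expTilt P g i - expTilt P h i) = 0 := by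
    rw [sum_sub_distrib, sum_expTilt hP, sum_expTilt hP, sub_self]
  set Q := expTilt P g
  set R := expTilt P h
  set c := log (partitionFn P g) - log (partitionFn P h)
  calc kl Q R
      = ∑ i, ((Q i - R i) * (g i - h i) - (R i * log (R i / Q i) - R i + Q i)
          + (1 - c) * (Q i - R i)) := by
        refine sum_congr rfl fun i _ => ?_
        rw [hQR, hRQ]; ring
    _ = ∑ i, ((Q i - R i) * (g i - h i) - (R i * log (R i / Q i) - R i + Q i)) := by
        rw [sum_add_distrib, ← mul_sum, hzero, mul_zero, add_zero]
    _ ≤ _ := sum_le_sum fun i _ => by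
        linarith [mul_sub_le_add_mul_log_div (hR i) (hQ i) (g i - h i)]

end expTilt

lemma sum_sub_expTilt_mul_le {P : ι → ℝ} (hP : ∀ i, 0 < P i) (hP1 : ∑ i, P i ≤ 1) (g h : ι → ℝ)
    {S : ι → ℝ} (hS : ∑ i, S i = 1) :
    ∑ i, (S i - expTilt P g i) * h i
      ≤ kl S P - kl S (expTilt P h) + ∑ i, (expTilt P g i + expTilt P h i) * (g i - h i) ^ 2 := by
  have : Nonempty ι := univ_nonempty_iff.mp (nonempty_of_sum_ne_zero (f := S) (by simp [hS]))
  have hcomparator := kl_sub_kl_expTilt hP h hS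
  have hvariational := log_partitionFn_sub_le_kl_expTilt hP hP1 h (expTilt_pos hP g)
    (sum_expTilt hP g)
  have hstability := kl_expTilt_le hP g h
  simp only [sub_mul, sum_sub_distrib]
  linarith

end

theorem optimistic_exp4_unconditional_general (N : ℕ) (η : ℝ) (hη : 0 < η)
    (M L : Fin N → ℝ) (Q' : Fin N → ℝ)
    (hQ'pos : ∀ π, 0 < Q' π) (hQ'sum : ∑ π, Q' π = 1)
    (Q Q'' : Fin N → ℝ)
    (hQ : ∀ π, Q π = Q' π * Real.exp (-η * M π) /
      ∑ π', Q' π' * Real.exp (-η * M π'))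
    (hQ'' : ∀ π, Q'' π = Q' π * Real.exp (-η * L π) /
      ∑ π', Q' π' * Real.exp (-η * L π')) :
    ∃ c : ℝ, 0 ≤ c ∧ c ≤ 1 ∧
      ∀ Qstar : Fin N → ℝ, (∀ π, 0 ≤ Qstar π) → (∑ π, Qstar π = 1) →
        ∑ π, (Q π - Qstar π) * L π ≤
          ((∑ π, Qstar π * Real.log (Qstar π / Q' π)) -
            ∑ π, Qstar π * Real.log (Qstar π / Q'' π)) / η
          + 2 * η * ∑ π, (c * Q π + (1 - c) * Q'' π) * (L π - M π)^2 := by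
  have hQ_eq : Q = expTilt Q' fun π => -η * M π := funext hQ
  have hQ''_eq : Q'' = expTilt Q' fun π => -η * L π := funext hQ''
  refine ⟨1 / 2, by norm_num, by norm_num, fun Qstar _ hQstar => ?_⟩
  have key := sum_sub_expTilt_mul_le hQ'pos hQ'sum.le (fun π => -η * M π) (fun π => -η * L π)
    hQstar
  rw [← hQ_eq, ← hQ''_eq] at key
  have hlinear : ∑ π, (Qstar π - Q π) * (-η * L π) = η * ∑ π, (Q π - Qstar π) * L π := by
    rw [Finset.mul_sum]
    exact Finset.sum_congr rfl fun π _ => by ring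
  have hquadratic : ∑ π, (Q π + Q'' π) * (-η * M π - -η * L π) ^ 2
      = η * (2 * η * ∑ π, (1 / 2 * Q π + (1 - 1 / 2) * Q'' π) * (L π - M π) ^ 2) := by
    rw [Finset.mul_sum, Finset.mul_sum]
    exact Finset.sum_congr rfl fun π _ => by ring
  rw [hlinear, hquadratic] at key
  unfold kl at key
  rw [div_add' _ _ _ hη.ne', le_div_iff₀ hη]
  linarith

/-- Key unconditional optimistic Exp4 inequality: there is a distribution `ξ`,
a convex combination of `Q` and `Q''`, such that the regret inequality holds
for every comparator distribution `Qstar`. -/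
theorem optimistic_exp4_unconditional (N : ℕ) (hN : 0 < N) (η : ℝ) (hη : 0 < η)
    (M L : Fin N → ℝ) (Q' : Fin N → ℝ)
    (hQ'pos : ∀ π, 0 < Q' π) (hQ'sum : ∑ π, Q' π = 1)
    (Q Q'' : Fin N → ℝ)
    (hQ : ∀ π, Q π = Q' π * Real.exp (-η * M π) /
      ∑ π', Q' π' * Real.exp (-η * M π'))
    (hQ'' : ∀ π, Q'' π = Q' π * Real.exp (-η * L π) /
      ∑ π', Q' π' * Real.exp (-η * L π')) :
    ∃ c : ℝ, 0 ≤ c ∧ c ≤ 1 ∧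
      ∀ Qstar : Fin N → ℝ, (∀ π, 0 ≤ Qstar π) → (∑ π, Qstar π = 1) →
        ∑ π, (Q π - Qstar π) * L π ≤
          ((∑ π, Qstar π * Real.log (Qstar π / Q' π)) -
            ∑ π, Qstar π * Real.log (Qstar π / Q'' π)) / η
          + 2 * η * ∑ π, (c * Q π + (1 - c) * Q'' π) * (L π - M π)^2 :=
  optimistic_exp4_unconditional_general N η hη M L Q' hQ'pos hQ'sum Q Q'' hQ hQ''
end

section
/- Consider T rounds; in each round t a prediction error e_t^i ∈ [0,1] is given for each of M predictors. Maintain active sets P_1 = [M] and P_{t+1} = {i ∈ P_t : Σ_{s ≤ t, i ∈ P_s} e_s^i ≤ E* }, i.e., a predictor is removed once its cumulative error while active exceeds budget E* ≥ 0. Let e_t = min_{i ∈ P_t} e_t^i (with P_t nonempty for all t). Then Σ_{t=1}^T e_t ≤ M(E* + 1). -/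
open Classical in
/-- Predictor-elimination budget bound: if predictors are removed from the
active set once their cumulative error while active exceeds `Estar`, and
`emin t` is the minimum error among active predictors at round `t`, then the
total minimum error over `T` rounds is at most `M * (Estar + 1)`. -/
theorem active_predictor_error_bound (M T : ℕ) (hM : 0 < M)
    (e : ℕ → Fin M → ℝ) (Estar : ℝ) (hEstar : 0 ≤ Estar)
    (hrange : ∀ t i, 0 ≤ e t i ∧ e t i ≤ 1)
    (P : ℕ → Finset (Fin M))
    (hP1 : P 1 = Finset.univ)
    (hPt : ∀ t, 1 ≤ t → P (t + 1) =
      (P t).filter (fun i =>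
        (∑ s ∈ Finset.Icc 1 t, if i ∈ P s then e s i else 0) ≤ Estar))
    (emin : ℕ → ℝ)
    (hemin : ∀ t ∈ Finset.Icc 1 T, ∃ i ∈ P t,
      emin t = e t i ∧ ∀ j ∈ P t, emin t ≤ e t j) :
    ∑ t ∈ Finset.Icc 1 T, emin t ≤ (M : ℝ) * (Estar + 1) := by
  set S : Fin M → ℕ → ℝ :=
    fun i t => ∑ s ∈ Finset.Icc 1 t, if i ∈ P s then e s i else 0 with hS
  -- key budget bound per predictor
  have key : ∀ i t, (i ∈ P (t + 1) → S i t ≤ Estar) ∧ S i t ≤ Estar + 1 := by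
    intro i t
    induction t with
    | zero =>
      simp [hS, Finset.Icc_eq_empty_of_lt]
      constructor
      · intro _; exact hEstar
      · linarith
    | succ t ih =>
      have hstep : S i (t + 1) = S i t + (if i ∈ P (t + 1) then e (t + 1) i else 0) := by
        rw [hS]
        exact Finset.sum_Icc_succ_top (Nat.le_add_left 1 t) _
      constructor
      · intro hmem
        have := hPt (t + 1) (Nat.le_add_left 1 t)
        rw [this, Finset.mem_filter] at hmem
        exact hmem.2
      · by_cases h : i ∈ P (t + 1)
        · have h1 : S i t ≤ Estar := ih.1 h
          have h2 : e (t + 1) i ≤ 1 := (hrange (t + 1) i).2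
          rw [hstep, if_pos h]
          linarith
        · rw [hstep, if_neg h]
          simpa using ih.2
  have step1 : ∀ t ∈ Finset.Icc 1 T,
      emin t ≤ ∑ i : Fin M, (if i ∈ P t then e t i else 0) := by
    intro t ht
    obtain ⟨i, hiP, heq, -⟩ := hemin t ht
    have hsingle : (if i ∈ P t then e t i else 0) ≤
        ∑ j : Fin M, (if j ∈ P t then e t j else 0) := by
      apply Finset.single_le_sum (f := fun j => if j ∈ P t then e t j else 0)
      · intro j _
        by_cases h : j ∈ P t <;> simp [h, (hrange t j).1]
      · exact Finset.mem_univ i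
    rw [heq]
    simpa [hiP] using hsingle
  calc ∑ t ∈ Finset.Icc 1 T, emin t
      ≤ ∑ t ∈ Finset.Icc 1 T, ∑ i : Fin M, (if i ∈ P t then e t i else 0) :=
        Finset.sum_le_sum step1
    _ = ∑ i : Fin M, S i T := by rw [Finset.sum_comm]
    _ ≤ ∑ _i : Fin M, (Estar + 1) := Finset.sum_le_sum fun i _ => (key i T).2
    _ = (M : ℝ) * (Estar + 1) := by simp; ring
end

section
/- Let m ∈ [0,1]^K, σ > 0, a* = argmin_a m(a), A = {a : m(a) ≤ m(a*) + σ}, and define φ(a) = a if a ∈ A and φ(a) = a* otherwise. Then for any ℓ ∈ [0,1]^K and any action b ∈ [K]: ℓ(φ(b)) − ℓ(b) ≤ max{0, 2‖ℓ − m‖_∞ − σ} ≤ ‖ℓ − m‖_∞²/σ. -/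
open Classical in
/-- Action remapping bias bound: remapping any action `b` outside the set
`A = {a : m a ≤ m a* + σ}` to the predicted-best action `a*` increases the
loss by at most `max 0 (2‖ℓ-m‖∞ - σ) ≤ ‖ℓ-m‖∞²/σ`. -/
theorem action_remapping_bias (K : ℕ) (hK : 0 < K) (σ : ℝ) (hσ : 0 < σ)
    (ℓ m : Fin K → ℝ)
    (hℓ : ∀ a, 0 ≤ ℓ a ∧ ℓ a ≤ 1) (hm : ∀ a, 0 ≤ m a ∧ m a ≤ 1)
    (astar : Fin K) (hastar : ∀ a, m astar ≤ m a) (b : Fin K) :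
    ℓ (if m b ≤ m astar + σ then b else astar) - ℓ b ≤
      max 0 (2 * (Finset.univ.sup' ⟨⟨0, hK⟩, Finset.mem_univ _⟩
        fun a => |ℓ a - m a|) - σ) ∧
    max 0 (2 * (Finset.univ.sup' ⟨⟨0, hK⟩, Finset.mem_univ _⟩
        fun a => |ℓ a - m a|) - σ) ≤
      (Finset.univ.sup' ⟨⟨0, hK⟩, Finset.mem_univ _⟩
        fun a => |ℓ a - m a|)^2 / σ := by
  set x := (Finset.univ.sup' ⟨⟨0, hK⟩, Finset.mem_univ _⟩ fun a => |ℓ a - m a|) with hx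
  have hxb : |ℓ b - m b| ≤ x := Finset.le_sup' (fun a => |ℓ a - m a|) (Finset.mem_univ b)
  have hxa : |ℓ astar - m astar| ≤ x := Finset.le_sup' (fun a => |ℓ a - m a|) (Finset.mem_univ astar)
  have hx0 : 0 ≤ x := le_trans (abs_nonneg _) hxb
  constructor
  · by_cases h : m b ≤ m astar + σ
    · simp [h]
    · simp only [h, if_false]
      push_neg at h
      have h1 : ℓ astar - m astar ≤ x := (abs_le.mp hxa).2
      have h2 : m b - ℓ b ≤ x := by
        have := (abs_le.mp hxb).1; linarith
      have : ℓ astar - ℓ b ≤ 2 * x - σ := by linarith [hastar b]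
      exact le_trans this (le_max_right _ _)
  · rw [max_le_iff]
    constructor
    · positivity
    · rw [sub_le_iff_le_add, div_add' _ _ _ (ne_of_gt hσ), le_div_iff₀ hσ]
      nlinarith [sq_nonneg (x - σ)]
end
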